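/- arXiv:2304.04172 — 3 statements merged into one kernel-verified Lean document; each statement's English description precedes it below -/
import Mathlib

section
/- Let f: K → ℝ be a convex function on a convex set K with minimizer w* ∈ K. Let (α_t) be nonnegative weights and (w_t), (x_t) sequences in K such that x_t is the α-weighted average of w_1,...,w_t, i.e., x_t = (1/∑_{τ=1}^t α_τ) ∑_{τ=1}^t α_τ w_τ. Then for every t ≥ 1, (∑_{τ=1}^t α_τ)(f(x_t) - f(w*)) ≤ ∑_{τ=1}^t α_τ ⟨∇f(x_τ), w_τ - w*⟩. -/
/-!
Write `A t = ∑_{τ ≤ t} α τ`, so that `A t • x t = A (t-1) • x (t-1) + α t • w t`, i.e.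
`α t • (w t - w*) = A (t-1) • (x t - x (t-1)) + α t • (x t - w*)`. Pairing with `∇f (x t)` and
applying the first-order convexity inequality to both terms gives
`A t (f (x t) - f w*) ≤ A (t-1) (f (x (t-1)) - f w*) + α t ⟪∇f (x t), w t - w*⟫`,
which telescopes.
-/

open scoped RealInnerProductSpace

section GradientInequality

variable {E : Type*} [NormedAddCommGroup E] {K : Set E} {f : E → ℝ} {x y : E}

theorem ConvexOn.le_sub_of_hasFDerivAt [NormedSpace ℝ E] {f' : E →L[ℝ] ℝ}
    (hf : ConvexOn ℝ K f) (hx : x ∈ K) (hy : y ∈ K) (h : HasFDerivAt f f' x) :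
    f' (y - x) ≤ f y - f x := by
  have hline : ConvexOn ℝ (AffineMap.lineMap x y ⁻¹' K) (f ∘ AffineMap.lineMap x y) :=
    hf.comp_affineMap _
  have hderiv : HasDerivAt (f ∘ AffineMap.lineMap x y) (f' (y - x)) (0 : ℝ) := by
    simpa using h.comp_hasDerivAt_of_eq _ AffineMap.hasDerivAt_lineMap (by simp)
  simpa [slope] using hline.le_slope_of_hasDerivAt (by simpa) (by simpa) one_pos hderiv

variable [InnerProductSpace ℝ E] [CompleteSpace E] {g : E}

theorem ConvexOn.sub_le_inner_gradient (hf : ConvexOn ℝ K f) (hx : x ∈ K) (hy : y ∈ K)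
    (h : HasGradientAt f g x) : f x - f y ≤ ⟪g, x - y⟫ := by
  have := hf.le_sub_of_hasFDerivAt hx hy h.hasFDerivAt
  rw [InnerProductSpace.toDual_apply_apply, ← neg_sub x y, inner_neg_right] at this
  linarith

theorem ConvexOn.add_mul_sub_le_of_add_smul_eq (hf : ConvexOn ℝ K f) {z u v w : E}
    (hz : z ∈ K) (hu : u ∈ K) (hv : v ∈ K) (hg : HasGradientAt f g z) {a b : ℝ}
    (ha : 0 ≤ a) (hb : 0 ≤ b) (hz_eq : (a + b) • z = a • u + b • w) :
    (a + b) * (f z - f v) ≤ a * (f u - f v) + b * ⟪g, w - v⟫ := by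
  have hzu := mul_le_mul_of_nonneg_left (hf.sub_le_inner_gradient hz hu hg) ha
  have hzv := mul_le_mul_of_nonneg_left (hf.sub_le_inner_gradient hz hv hg) hb
  have hsplit : a * ⟪g, z - u⟫ + b * ⟪g, z - v⟫ = b * ⟪g, w - v⟫ := by
    simp only [← real_inner_smul_right, ← inner_add_right]
    congr 1
    linear_combination (norm := module) hz_eq
  linarith

end GradientInequality

theorem stmt0_general {n : ℕ} (K : Set (EuclideanSpace ℝ (Fin n))) (hK : Convex ℝ K)
    (f : EuclideanSpace ℝ (Fin n) → ℝ) (hf : ConvexOn ℝ K f)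
    (G : EuclideanSpace ℝ (Fin n) → EuclideanSpace ℝ (Fin n))
    (hgrad : ∀ x ∈ K, HasGradientAt f (G x) x)
    (wstar : EuclideanSpace ℝ (Fin n)) (hws : wstar ∈ K)
    (α : ℕ → ℝ) (hα : ∀ t, 0 ≤ α t)
    (w x : ℕ → EuclideanSpace ℝ (Fin n)) (hw : ∀ t, 1 ≤ t → w t ∈ K)
    (hpos : ∀ t, 1 ≤ t → 0 < ∑ τ ∈ Finset.Icc 1 t, α τ)
    (hx : ∀ t, 1 ≤ t →
      x t = (∑ τ ∈ Finset.Icc 1 t, α τ)⁻¹ • ∑ τ ∈ Finset.Icc 1 t, α τ • w τ) :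
    ∀ t, 1 ≤ t →
      (∑ τ ∈ Finset.Icc 1 t, α τ) * (f (x t) - f wstar)
        ≤ ∑ τ ∈ Finset.Icc 1 t, α τ * ⟪G (x τ), w τ - wstar⟫ := by
  have hxK : ∀ t, 1 ≤ t → x t ∈ K := fun t ht => by
    rw [hx t ht]
    exact hK.centerMass_mem (fun τ _ => hα τ) (hpos t ht)
      fun τ hτ => hw τ (Finset.mem_Icc.1 hτ).1
  have hsum_smul : ∀ t, 1 ≤ t →
      (∑ τ ∈ Finset.Icc 1 t, α τ) • x t = ∑ τ ∈ Finset.Icc 1 t, α τ • w τ :=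
    fun t ht => by rw [hx t ht, smul_inv_smul₀ (hpos t ht).ne']
  intro t ht
  induction t, ht using Nat.le_induction with
  | base =>
    have hα1 : α 1 ≠ 0 := by simpa using (hpos 1 le_rfl).ne'
    have hx1 : x 1 = w 1 := (smul_right_inj hα1).1 (by simpa using hsum_smul 1 le_rfl)
    simpa [hx1] using mul_le_mul_of_nonneg_left
      (hf.sub_le_inner_gradient (hxK 1 le_rfl) hws (hgrad _ (hxK 1 le_rfl))) (hα 1)
  | succ k hk ih =>
    have hrec : (∑ τ ∈ Finset.Icc 1 k, α τ + α (k + 1)) • x (k + 1)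
        = (∑ τ ∈ Finset.Icc 1 k, α τ) • x k + α (k + 1) • w (k + 1) := by
      rw [← Finset.sum_Icc_succ_top (by omega), hsum_smul (k + 1) (by omega),
        Finset.sum_Icc_succ_top (by omega), hsum_smul k hk]
    have hstep := hf.add_mul_sub_le_of_add_smul_eq (hxK (k + 1) (by omega)) (hxK k hk) hws
      (hgrad _ (hxK (k + 1) (by omega))) (Finset.sum_nonneg fun τ _ => hα τ) (hα _) hrec
    rw [Finset.sum_Icc_succ_top (by omega), Finset.sum_Icc_succ_top (by omega)]
    linarith

/-- Anytime averaging guarantee: If `f` is convex on a convex set `K` with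
minimizer `w*`, `α τ ≥ 0`, and `x t` is the `α`-weighted average of `w 1, ..., w t`, then
`(∑_{τ=1}^t α τ) (f (x t) - f w*) ≤ ∑_{τ=1}^t α τ ⟪∇f (x τ), w τ - w*⟫`. -/
theorem stmt0 {n : ℕ} (K : Set (EuclideanSpace ℝ (Fin n))) (hK : Convex ℝ K)
    (f : EuclideanSpace ℝ (Fin n) → ℝ) (hf : ConvexOn ℝ K f)
    (G : EuclideanSpace ℝ (Fin n) → EuclideanSpace ℝ (Fin n))
    (hgrad : ∀ x ∈ K, HasGradientAt f (G x) x)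
    (wstar : EuclideanSpace ℝ (Fin n)) (hws : wstar ∈ K)
    (hmin : ∀ y ∈ K, f wstar ≤ f y)
    (α : ℕ → ℝ) (hα : ∀ t, 0 ≤ α t)
    (w x : ℕ → EuclideanSpace ℝ (Fin n)) (hw : ∀ t, 1 ≤ t → w t ∈ K)
    (hpos : ∀ t, 1 ≤ t → 0 < ∑ τ ∈ Finset.Icc 1 t, α τ)
    (hx : ∀ t, 1 ≤ t →
      x t = (∑ τ ∈ Finset.Icc 1 t, α τ)⁻¹ • ∑ τ ∈ Finset.Icc 1 t, α τ • w τ) :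
    ∀ t, 1 ≤ t →
      (∑ τ ∈ Finset.Icc 1 t, α τ) * (f (x t) - f wstar)
        ≤ ∑ τ ∈ Finset.Icc 1 t, α τ * ⟪G (x τ), w τ - wstar⟫ :=
  stmt0_general K hK f hf G hgrad wstar hws α hα w x hw hpos hx
end

section
/- Let T > 2 be an integer, (A_t)_{t∈[T]} nonnegative reals, and (B_t)_{t∈[T]} a monotonically increasing sequence of nonnegative reals such that for every t ≤ T, t·A_t ≤ B_t + (1/(4(1 + log T))) ∑_{τ=1}^t A_τ. Then for every t ≤ T, A_t ≤ 2B_t / t. -/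
/-!
Strong induction on `t`. If `A τ ≤ 2 B τ / τ` for all `τ < t`, monotonicity of `B` gives
`∑_{τ < t} A τ ≤ 2 B t · H_T ≤ 2 B t (1 + log T)`, so the hypothesis at `t`, with
`c = 1 / (4 (1 + log T)) ≤ 1/4`, becomes
`t A t ≤ (3/2) B t + c A t`, which rearranges to `t A t ≤ 2 B t`.
-/

open Finset

theorem harmonic_mono : Monotone harmonic :=
  monotone_nat_of_le_succ fun n => by
    rw [harmonic_succ]
    exact le_add_of_nonneg_right (by positivity)

theorem one_le_harmonic {n : ℕ} (hn : n ≠ 0) : 1 ≤ harmonic n := by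
  simpa using harmonic_mono (Nat.one_le_iff_ne_zero.mpr hn)

theorem sum_Icc_le_mul_harmonic {a : ℕ → ℝ} {n : ℕ} {C : ℝ}
    (h : ∀ τ ∈ Icc 1 n, a τ ≤ C / τ) : ∑ τ ∈ Icc 1 n, a τ ≤ C * harmonic n := by
  calc ∑ τ ∈ Icc 1 n, a τ ≤ ∑ τ ∈ Icc 1 n, C * (τ : ℝ)⁻¹ := sum_le_sum h
    _ = C * harmonic n := by rw [← mul_sum, harmonic_eq_sum_Icc]; push_cast; rfl

theorem le_two_mul_div_of_mul_le_add_mul {t c H a b S : ℝ} (ht : 1 ≤ t) (hc : 0 ≤ c)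
    (hH : 1 ≤ H) (hcH : 4 * c * H ≤ 1) (hb : 0 ≤ b) (hS : S ≤ 2 * b * H)
    (h : t * a ≤ b + c * (S + a)) : a ≤ 2 * b / t := by
  have hcS : c * S ≤ b / 2 := by nlinarith [mul_le_mul_of_nonneg_left hS hc]
  have hc4 : 4 * c ≤ 1 := by nlinarith
  rw [le_div_iff₀ (by linarith)]
  rcases le_total a 0 with ha | ha
  · nlinarith
  · nlinarith [mul_le_mul_of_nonneg_right ht ha]

theorem le_two_mul_div_of_mul_le_add_mul_sum (T : ℕ) (A B : ℕ → ℝ) {c : ℝ} (hc : 0 ≤ c)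
    (hcT : 4 * c * harmonic T ≤ 1) (hB0 : 0 ≤ B 1) (hB : MonotoneOn B (Icc 1 T))
    (h : ∀ t ∈ Icc 1 T, (t : ℝ) * A t ≤ B t + c * ∑ τ ∈ Icc 1 t, A τ) :
    ∀ t ∈ Icc 1 T, A t ≤ 2 * B t / t := by
  intro t
  induction t using Nat.strong_induction_on with
  | _ t ih =>
    intro ht
    obtain ⟨ht1, htT⟩ := mem_Icc.mp ht
    obtain ⟨s, rfl⟩ : ∃ s, t = s + 1 := ⟨t - 1, by omega⟩
    have hBt : 0 ≤ B (s + 1) :=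
      hB0.trans (hB (by simp; omega) (by simpa using ht) ht1)
    have hS : ∑ τ ∈ Icc 1 s, A τ ≤ 2 * B (s + 1) * harmonic s := by
      refine sum_Icc_le_mul_harmonic fun τ hτ => ?_
      obtain ⟨hτ1, hτs⟩ := mem_Icc.mp hτ
      have hτT : τ ∈ Icc 1 T := mem_Icc.mpr ⟨hτ1, by omega⟩
      calc A τ ≤ 2 * B τ / τ := ih τ (by omega) hτT
        _ ≤ 2 * B (s + 1) / τ := by
          gcongr
          exact hB (by simpa using hτT) (by simpa using ht) (by omega)
    have hsT : (harmonic s : ℝ) ≤ harmonic T := by exact_mod_cast harmonic_mono (by omega)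
    have hT0 : 1 ≤ (harmonic T : ℝ) := by exact_mod_cast one_le_harmonic (by omega)
    refine le_two_mul_div_of_mul_le_add_mul (by simp) hc hT0 hcT hBt
      (hS.trans (by gcongr)) ?_
    simpa [sum_Icc_succ_top (by omega : 1 ≤ s + 1)] using h (s + 1) ht

theorem stmt4_general (T : ℕ) (A B : ℕ → ℝ)
    (hB0 : 0 ≤ B 1)
    (hBmono : ∀ s ∈ Finset.Icc 1 T, ∀ t ∈ Finset.Icc 1 T, s ≤ t → B s ≤ B t)
    (h : ∀ t ∈ Finset.Icc 1 T,
      (t : ℝ) * A t ≤ B t + (1 / (4 * (1 + Real.log T))) * ∑ τ ∈ Finset.Icc 1 t, A τ) :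
    ∀ t ∈ Finset.Icc 1 T, A t ≤ 2 * B t / (t : ℝ) := by
  have hlog : 0 < 1 + Real.log T := by linarith [Real.log_natCast_nonneg T]
  refine le_two_mul_div_of_mul_le_add_mul_sum T A B (by positivity) ?_ hB0
    (fun s hs t ht hst => hBmono s hs t ht hst) h
  calc 4 * (1 / (4 * (1 + Real.log T))) * harmonic T
      ≤ 4 * (1 / (4 * (1 + Real.log T))) * (1 + Real.log T) := by
        gcongr; exact harmonic_le_one_add_log T
    _ = 1 := by field_simp

/-- If `T > 2`, `A t ≥ 0`, `B t` nonnegative and monotone increasing, and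
`t * A t ≤ B t + (1/(4(1+log T))) ∑_{τ=1}^t A τ` for all `t ∈ [T]`, then
`A t ≤ 2 B t / t` for all `t ∈ [T]`. -/
theorem stmt4 (T : ℕ) (hT : 2 < T) (A B : ℕ → ℝ)
    (hA : ∀ t ∈ Finset.Icc 1 T, 0 ≤ A t)
    (hB0 : 0 ≤ B 1)
    (hBmono : ∀ s ∈ Finset.Icc 1 T, ∀ t ∈ Finset.Icc 1 T, s ≤ t → B s ≤ B t)
    (h : ∀ t ∈ Finset.Icc 1 T,
      (t : ℝ) * A t ≤ B t + (1 / (4 * (1 + Real.log T))) * ∑ τ ∈ Finset.Icc 1 t, A τ) :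
    ∀ t ∈ Finset.Icc 1 T, A t ≤ 2 * B t / (t : ℝ) :=
  stmt4_general T A B hB0 hBmono h
end

section
/- Consider Optimistic Online Gradient Descent on a convex set K of diameter D: given loss vectors d_t, hint vectors d̂_t, weights α_t ≥ 0, and step size η > 0, with updates w_t = argmin_{w∈K}(α_t ⟨d̂_t, w⟩ + (1/2η)‖w - y_{t-1}‖²) and y_t = argmin_{y∈K}(α_t ⟨d_t, y⟩ + (1/2η)‖y - y_{t-1}‖²). Then for every w ∈ K: ∑_{t=1}^T α_t ⟨d_t, w_t - w⟩ ≤ 4D²/η + (η/2) ∑_{t=1}^T α_t² ‖d_t - d̂_t‖² - (1/2η) ∑_{t=1}^T ‖w_t - y_{t-1}‖². -/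
/-!
Each proximal step satisfies the three-point inequality of a minimizer of a linear function plus
`‖· - y₀‖² / (2η)` over a convex set. Comparing the hint step `w t` with `y t`, and `y t` with the
comparator `u`, bounds the regret of round `t` by the telescoping potential
`(‖u - y (t-1)‖² - ‖u - y t‖²) / (2η)`, the hint error `α t ⟪dv t - dhat t, w t - y t⟫` (paid by
Young's inequality with the `‖w t - y t‖² / (2η)` gained by `w t`), and the leftover
`-‖w t - y (t-1)‖² / (2η)`. Summing, only `‖u - y 0‖² / (2η) ≤ D² / (2η)` remains.
-/

open scoped RealInnerProductSpace

theorem Finset.sum_Icc_one_sub' {M : Type*} [AddCommGroup M] (f : ℕ → M) (T : ℕ) :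
    ∑ t ∈ Finset.Icc 1 T, (f (t - 1) - f t) = f 0 - f T := by
  induction T with
  | zero => simp
  | succ T ih =>
    rw [Finset.sum_Icc_succ_top (by omega), ih, Nat.add_sub_cancel, sub_add_sub_cancel]

section InnerProductSpace

variable {E : Type*} [NormedAddCommGroup E] [InnerProductSpace ℝ E]

/-- The objective is a quadratic: its first-order term at the minimizer is nonnegative along the
convex set `K`, and its second-order term is exactly `c ‖u - w‖²`. -/
theorem IsMinOn.linear_add_norm_sq_three_point {K : Set E} (hK : Convex ℝ K) {a c : ℝ}
    {g y₀ w u : E} (hmin : IsMinOn (fun v ↦ a * ⟪g, v⟫ + c * ‖v - y₀‖ ^ 2) K w)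
    (hw : w ∈ K) (hu : u ∈ K) :
    a * ⟪g, w⟫ + c * ‖w - y₀‖ ^ 2 + c * ‖u - w‖ ^ 2 ≤ a * ⟪g, u⟫ + c * ‖u - y₀‖ ^ 2 := by
  have hderiv := ((innerSL ℝ g).hasFDerivAt.const_mul a).add
    (((hasFDerivAt_id w).sub_const y₀).norm_sq.const_mul c)
  have hfirst_order : 0 ≤ a * ⟪g, u - w⟫ + c * (2 * ⟪w - y₀, u - w⟫) := by
    simpa [inner_sub_left] using hmin.localize.hasFDerivWithinAt_nonneg hderiv.hasFDerivWithinAt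
      (sub_mem_posTangentConeAt_of_segment_subset (hK.segment_subset hw hu))
  have hexpand : ‖u - y₀‖ ^ 2 = ‖w - y₀‖ ^ 2 + 2 * ⟪w - y₀, u - w⟫ + ‖u - w‖ ^ 2 := by
    rw [← norm_add_sq_real, sub_add_sub_cancel']
  rw [inner_sub_right g u w] at hfirst_order
  rw [hexpand]
  linarith

theorem real_inner_le_young {η : ℝ} (hη : 0 < η) (x y : E) :
    ⟪x, y⟫ ≤ η / 2 * ‖x‖ ^ 2 + 1 / (2 * η) * ‖y‖ ^ 2 := by
  have hsq : 0 ≤ ‖η • x - y‖ ^ 2 := by positivity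
  rw [norm_sub_sq_real, norm_smul, real_inner_smul_left, Real.norm_of_nonneg hη.le] at hsq
  rw [div_mul_eq_mul_div, one_div_mul_eq_div, div_add_div _ _ two_ne_zero (by positivity),
    le_div_iff₀ (by positivity)]
  nlinarith

theorem optimistic_round_le {K : Set E} (hK : Convex ℝ K) {η a : ℝ} (hη : 0 < η)
    {d d' y₀ w y u : E}
    (hw_min : IsMinOn (fun v ↦ a * ⟪d', v⟫ + 1 / (2 * η) * ‖v - y₀‖ ^ 2) K w)
    (hy_min : IsMinOn (fun v ↦ a * ⟪d, v⟫ + 1 / (2 * η) * ‖v - y₀‖ ^ 2) K y)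
    (hw : w ∈ K) (hy : y ∈ K) (hu : u ∈ K) :
    a * ⟪d, w - u⟫ ≤ η / 2 * (a ^ 2 * ‖d - d'‖ ^ 2)
      + (1 / (2 * η) * ‖u - y₀‖ ^ 2 - 1 / (2 * η) * ‖u - y‖ ^ 2)
      - 1 / (2 * η) * ‖w - y₀‖ ^ 2 := by
  have hw_three := hw_min.linear_add_norm_sq_three_point hK hw hy
  have hy_three := hy_min.linear_add_norm_sq_three_point hK hy hu
  have hyoung := real_inner_le_young hη (a • (d - d')) (w - y)
  rw [norm_smul, mul_pow, Real.norm_eq_abs, sq_abs] at hyoung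
  have hsplit : a * ⟪d, w - u⟫ = ⟪a • (d - d'), w - y⟫
      + (a * ⟪d', w⟫ - a * ⟪d', y⟫) + (a * ⟪d, y⟫ - a * ⟪d, u⟫) := by
    simp only [real_inner_smul_left, inner_sub_left, inner_sub_right]
    ring
  rw [norm_sub_rev y w] at hw_three
  linarith

theorem optimistic_regret_le {K : Set E} (hK : Convex ℝ K)
    {η : ℝ} (hη : 0 < η) (T : ℕ) (α : ℕ → ℝ) (dv dhat w y : ℕ → E)
    (hwK : ∀ t ∈ Finset.Icc 1 T, w t ∈ K) (hyK : ∀ t ∈ Finset.Icc 1 T, y t ∈ K)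
    (hw : ∀ t ∈ Finset.Icc 1 T,
      IsMinOn (fun v ↦ α t * ⟪dhat t, v⟫ + 1 / (2 * η) * ‖v - y (t - 1)‖ ^ 2) K (w t))
    (hy : ∀ t ∈ Finset.Icc 1 T,
      IsMinOn (fun v ↦ α t * ⟪dv t, v⟫ + 1 / (2 * η) * ‖v - y (t - 1)‖ ^ 2) K (y t))
    {u : E} (hu : u ∈ K) :
    ∑ t ∈ Finset.Icc 1 T, α t * ⟪dv t, w t - u⟫
      ≤ 1 / (2 * η) * ‖u - y 0‖ ^ 2
        + η / 2 * ∑ t ∈ Finset.Icc 1 T, α t ^ 2 * ‖dv t - dhat t‖ ^ 2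
        - 1 / (2 * η) * ∑ t ∈ Finset.Icc 1 T, ‖w t - y (t - 1)‖ ^ 2 := by
  have hrounds := Finset.sum_le_sum fun t ht ↦
    optimistic_round_le hK hη (hw t ht) (hy t ht) (hwK t ht) (hyK t ht) hu
  rw [Finset.sum_sub_distrib, Finset.sum_add_distrib,
    Finset.sum_Icc_one_sub' (fun t ↦ 1 / (2 * η) * ‖u - y t‖ ^ 2), ← Finset.mul_sum,
    ← Finset.mul_sum] at hrounds
  have hlast : 0 ≤ 1 / (2 * η) * ‖u - y T‖ ^ 2 := by positivity
  linarith

end InnerProductSpace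

theorem stmt11_general {n : ℕ} (K : Set (EuclideanSpace ℝ (Fin n))) (hK : Convex ℝ K)
    (D η : ℝ) (hη : 0 < η) (hD : ∀ a ∈ K, ∀ b ∈ K, ‖a - b‖ ≤ D)
    (T : ℕ) (α : ℕ → ℝ)
    (dv dhat : ℕ → EuclideanSpace ℝ (Fin n))
    (w y : ℕ → EuclideanSpace ℝ (Fin n))
    (hy0 : y 0 ∈ K)
    (hwK : ∀ t ∈ Finset.Icc 1 T, w t ∈ K)
    (hyK : ∀ t ∈ Finset.Icc 1 T, y t ∈ K)
    (hw : ∀ t ∈ Finset.Icc 1 T, ∀ u ∈ K,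
      α t * ⟪dhat t, w t⟫ + (1 / (2 * η)) * ‖w t - y (t - 1)‖ ^ 2
        ≤ α t * ⟪dhat t, u⟫ + (1 / (2 * η)) * ‖u - y (t - 1)‖ ^ 2)
    (hy : ∀ t ∈ Finset.Icc 1 T, ∀ u ∈ K,
      α t * ⟪dv t, y t⟫ + (1 / (2 * η)) * ‖y t - y (t - 1)‖ ^ 2
        ≤ α t * ⟪dv t, u⟫ + (1 / (2 * η)) * ‖u - y (t - 1)‖ ^ 2) :
    ∀ u ∈ K,
      ∑ t ∈ Finset.Icc 1 T, α t * ⟪dv t, w t - u⟫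
        ≤ 4 * D ^ 2 / η
          + (η / 2) * ∑ t ∈ Finset.Icc 1 T, (α t) ^ 2 * ‖dv t - dhat t‖ ^ 2
          - (1 / (2 * η)) * ∑ t ∈ Finset.Icc 1 T, ‖w t - y (t - 1)‖ ^ 2 := by
  intro u hu
  have hregret := optimistic_regret_le hK hη T α dv dhat w y hwK hyK
    (fun t ht ↦ isMinOn_iff.2 (hw t ht)) (fun t ht ↦ isMinOn_iff.2 (hy t ht)) hu
  have hdist : ‖u - y 0‖ ^ 2 ≤ D ^ 2 :=
    pow_le_pow_left₀ (norm_nonneg _) (hD u hu (y 0) hy0) 2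
  have hinit : 1 / (2 * η) * ‖u - y 0‖ ^ 2 ≤ 4 * D ^ 2 / η := calc
    1 / (2 * η) * ‖u - y 0‖ ^ 2 ≤ 1 / (2 * η) * D ^ 2 := by gcongr
    _ ≤ 4 * D ^ 2 / η := by
      rw [one_div_mul_eq_div, div_le_div_iff₀ (by positivity) hη]
      nlinarith [sq_nonneg D]
  linarith

/-- Optimistic OGD regret bound: on a convex set `K` of diameter `D`, with
loss vectors `dv t`, hint vectors `dhat t`, weights `α t ≥ 0`, step size `η > 0`, and
updates `w t = argmin_{w ∈ K} (α t ⟪dhat t, w⟫ + ‖w - y (t-1)‖²/(2η))`,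
`y t = argmin_{y ∈ K} (α t ⟪dv t, y⟫ + ‖y - y (t-1)‖²/(2η))`, for every `w ∈ K`:
`∑_{t=1}^T α t ⟪dv t, w t - w⟫
  ≤ 4D²/η + (η/2) ∑ α t² ‖dv t - dhat t‖² - (1/(2η)) ∑ ‖w t - y (t-1)‖²`. -/
theorem stmt11 {n : ℕ} (K : Set (EuclideanSpace ℝ (Fin n))) (hK : Convex ℝ K)
    (D η : ℝ) (hη : 0 < η) (hD : ∀ a ∈ K, ∀ b ∈ K, ‖a - b‖ ≤ D)
    (T : ℕ) (α : ℕ → ℝ) (hα : ∀ t, 0 ≤ α t)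
    (dv dhat : ℕ → EuclideanSpace ℝ (Fin n))
    (w y : ℕ → EuclideanSpace ℝ (Fin n))
    (hy0 : y 0 ∈ K)
    (hwK : ∀ t ∈ Finset.Icc 1 T, w t ∈ K)
    (hyK : ∀ t ∈ Finset.Icc 1 T, y t ∈ K)
    (hw : ∀ t ∈ Finset.Icc 1 T, ∀ u ∈ K,
      α t * ⟪dhat t, w t⟫ + (1 / (2 * η)) * ‖w t - y (t - 1)‖ ^ 2
        ≤ α t * ⟪dhat t, u⟫ + (1 / (2 * η)) * ‖u - y (t - 1)‖ ^ 2)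
    (hy : ∀ t ∈ Finset.Icc 1 T, ∀ u ∈ K,
      α t * ⟪dv t, y t⟫ + (1 / (2 * η)) * ‖y t - y (t - 1)‖ ^ 2
        ≤ α t * ⟪dv t, u⟫ + (1 / (2 * η)) * ‖u - y (t - 1)‖ ^ 2) :
    ∀ u ∈ K,
      ∑ t ∈ Finset.Icc 1 T, α t * ⟪dv t, w t - u⟫
        ≤ 4 * D ^ 2 / η
          + (η / 2) * ∑ t ∈ Finset.Icc 1 T, (α t) ^ 2 * ‖dv t - dhat t‖ ^ 2
          - (1 / (2 * η)) * ∑ t ∈ Finset.Icc 1 T, ‖w t - y (t - 1)‖ ^ 2 :=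
  stmt11_general K hK D η hη hD T α dv dhat w y hy0 hwK hyK hw hy
end
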